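/- arXiv:1502.04411 — 2 statements merged into one kernel-verified Lean document; each statement's English description precedes it below -/
import Mathlib

section
/- Let v₁, …, v_r be distinct monomials of A whose F-span is a Kummer space, and suppose that for all j ≠ k either v_j·v_k = i·v_k·v_j or v_k·v_j = i·v_j·v_k (no two of them commute or anti-commute). Then there is a permutation σ of {1, …, r} such that v_{σ(k)}·v_{σ(j)} = i·v_{σ(j)}·v_{σ(k)} whenever k < j. -/
/-- A fixed presentation of a tensor product of `n` cyclic algebras of degree 4
over `F`: generators `x k`, `y k` with `(x k)⁴ = αₖ·1`, `(y k)⁴ = βₖ·1`,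
`x k · y k = i · (y k · x k)`, generators with different indices commuting, and the
`x k, y k` generating `A` as an `F`-algebra. -/
structure TensorCyclicPres (F A : Type*) [Field F] [Ring A] [Algebra F A]
    (i : F) (n : ℕ) where
  x : Fin n → A
  y : Fin n → A
  α : Fin n → F
  β : Fin n → F
  α_ne_zero : ∀ k, α k ≠ 0
  β_ne_zero : ∀ k, β k ≠ 0
  x_pow : ∀ k, x k ^ 4 = algebraMap F A (α k)
  y_pow : ∀ k, y k ^ 4 = algebraMap F A (β k)
  xy_rel : ∀ k, x k * y k = i • (y k * x k)
  xx_comm : ∀ k l, k ≠ l → Commute (x k) (x l)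
  yy_comm : ∀ k l, k ≠ l → Commute (y k) (y l)
  xy_comm : ∀ k l, k ≠ l → Commute (x k) (y l)
  generates : Algebra.adjoin F (Set.range x ∪ Set.range y) = ⊤

/-- A monomial with respect to the presentation: an element of the form
`∏ₖ (x k)^{aₖ} (y k)^{bₖ}` with `0 ≤ aₖ, bₖ ≤ 3`. -/
def TensorCyclicPres.IsMonomial {F A : Type*} [Field F] [Ring A] [Algebra F A]
    {i : F} {n : ℕ} (P : TensorCyclicPres F A i n) (v : A) : Prop :=
  ∃ a b : Fin n → Fin 4,
    v = ((List.finRange n).map (fun k => P.x k ^ (a k : ℕ) * P.y k ^ (b k : ℕ))).prod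

/-!
Write `a ≺ b` for `a b = i · b a`. For two monomials `≺` cannot hold both ways, since then
`a b = i² · a b = -a b`. It is transitive on the given monomials: a cycle `z₁ ≺ z₂ ≺ z₃ ≺ z₁`
would make the alternating sum `∑_{c⁴=1} c² (z₁ + z₂ + c z₃)⁴`, a scalar when the span is a
Kummer space, equal to `(16 - 16 i) z₁ z₂ z₃²`; but `z₁ z₂ z₃²` does not commute with `z₁`.
So `≺` is a strict total order on the indices, and `σ` lists them in increasing order.
-/

theorem Fintype.exists_equiv_fin_rel_of_lt {α : Type*} [Fintype α] {r : ℕ}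
    (hα : Fintype.card α = r) (R : α → α → Prop) [IsStrictTotalOrder α R] :
    ∃ e : Fin r ≃ α, ∀ k j, k < j → R (e k) (e j) := by
  classical
  let _ : LinearOrder α := linearOrderOfSTO R
  exact ⟨(Fintype.orderIsoFinOfCardEq α hα).toEquiv, fun _ _ hkj =>
    (Fintype.orderIsoFinOfCardEq α hα).strictMono hkj⟩

section Kummer

variable {F A : Type*} [Field F] [Ring A] [Algebra F A]

def Submodule.IsKummer (V : Submodule F A) : Prop :=
  ∀ u ∈ V, u ^ 4 ∈ Set.range (algebraMap F A)

theorem Submodule.IsKummer.mono {V W : Submodule F A} (hW : W.IsKummer) (hVW : V ≤ W) :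
    V.IsKummer :=
  fun u hu => hW u (hVW hu)

theorem TensorCyclicPres.x_ne_zero [Nontrivial A] {i : F} {n : ℕ}
    (P : TensorCyclicPres F A i n) (k : Fin n) : P.x k ≠ 0 := by
  intro h
  have := P.x_pow k
  rw [h, zero_pow four_ne_zero, eq_comm, map_eq_zero] at this
  exact P.α_ne_zero k this

theorem TensorCyclicPres.y_ne_zero [Nontrivial A] {i : F} {n : ℕ}
    (P : TensorCyclicPres F A i n) (k : Fin n) : P.y k ≠ 0 := by
  intro h
  have := P.y_pow k
  rw [h, zero_pow four_ne_zero, eq_comm, map_eq_zero] at this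
  exact P.β_ne_zero k this

theorem TensorCyclicPres.IsMonomial.ne_zero [Nontrivial A] [NoZeroDivisors A] {i : F} {n : ℕ}
    {P : TensorCyclicPres F A i n} {v : A} (hv : P.IsMonomial v) : v ≠ 0 := by
  obtain ⟨a, b, rfl⟩ := hv
  refine List.prod_ne_zero fun h0 => ?_
  obtain ⟨k, -, hk⟩ := List.mem_map.mp h0
  exact mul_ne_zero (pow_ne_zero _ (P.x_ne_zero k)) (pow_ne_zero _ (P.y_ne_zero k)) hk

variable {i : F}

theorem mul_eq_zero_of_mul_eq_smul_mul_of_mul_eq_smul_mul [NeZero (2 : F)] (hi : i ^ 2 = -1)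
    {a b : A} (hab : a * b = i • (b * a)) (hba : b * a = i • (a * b)) : a * b = 0 := by
  have h2 : (2 : F) • (a * b) = 0 := by
    calc (2 : F) • (a * b) = a * b + i • i • (a * b) := by rw [two_smul, ← hba, ← hab]
      _ = 0 := by rw [smul_smul, ← sq, hi, neg_one_smul, add_neg_cancel]
  exact (smul_eq_zero.mp h2).resolve_left two_ne_zero

theorem mul_eq_neg_smul_of_mul_eq_smul (hi : i ^ 2 = -1) {a b : A} (h : a * b = i • (b * a)) :
    b * a = (-i) • (a * b) := by
  rw [h, smul_smul, neg_mul, ← sq, hi, neg_neg, one_smul]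

theorem mul_left_comm_of_mul_eq_smul {q : F} {a b : A} (h : b * a = q • (a * b)) (t : A) :
    b * (a * t) = q • (a * (b * t)) := by
  rw [← mul_assoc, h, smul_mul_assoc, mul_assoc]

/- The weights `c²` keep the words with exactly two letters `z₃`; among them those without `z₂`
(or without `z₁`) cancel because the Gaussian binomial `[4 choose 2]` vanishes at `i`. -/
theorem alternating_sum_pow_four_of_cyclic (hi : i ^ 2 = -1) {z₁ z₂ z₃ : A}
    (h₂₁ : z₂ * z₁ = (-i) • (z₁ * z₂)) (h₃₂ : z₃ * z₂ = (-i) • (z₂ * z₃))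
    (h₃₁ : z₃ * z₁ = i • (z₁ * z₃)) :
    (z₁ + z₂ + z₃) ^ 4 - (z₁ + z₂ + i • z₃) ^ 4 + (z₁ + z₂ + (-1 : F) • z₃) ^ 4
      - (z₁ + z₂ + (-i) • z₃) ^ 4 = (16 - 16 * i) • (z₁ * (z₂ * (z₃ * z₃))) := by
  have hii : i * i = -1 := by rw [← sq, hi]
  simp only [pow_succ, pow_zero, one_mul, add_mul, mul_add, smul_mul_assoc, mul_smul_comm,
    smul_smul, mul_assoc, h₂₁, mul_left_comm_of_mul_eq_smul h₂₁, h₃₂,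
    mul_left_comm_of_mul_eq_smul h₃₂, h₃₁, mul_left_comm_of_mul_eq_smul h₃₁, smul_add,
    neg_smul, neg_neg, mul_neg, neg_mul, mul_one, smul_neg, hii]
  module

theorem mul_eq_zero_of_smul_mem_range_algebraMap {q c : F} (hq : q ≠ 1) (hc : c ≠ 0)
    {z w : A} (hw : c • w ∈ Set.range (algebraMap F A)) (hwz : w * z = q • (z * w)) :
    z * w = 0 := by
  obtain ⟨μ, hμ⟩ := hw
  have hcomm : (c * q) • (z * w) = c • (z * w) := by
    rw [← smul_smul, ← hwz, ← smul_mul_assoc, ← mul_smul_comm, ← hμ, Algebra.commutes]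
  have hq' : c * q - c ≠ 0 := by
    rw [← mul_sub_one]
    exact mul_ne_zero hc (sub_ne_zero.mpr hq)
  exact (smul_eq_zero.mp (by rw [sub_smul, hcomm, sub_self])).resolve_left hq'

theorem not_isKummer_span_of_cyclic [CharZero F] [NoZeroDivisors A] (hi : i ^ 2 = -1)
    {z₁ z₂ z₃ : A} (hz₁ : z₁ ≠ 0) (hz₂ : z₂ ≠ 0) (hz₃ : z₃ ≠ 0)
    (h₁₂ : z₁ * z₂ = i • (z₂ * z₁)) (h₂₃ : z₂ * z₃ = i • (z₃ * z₂))
    (h₃₁ : z₃ * z₁ = i • (z₁ * z₃)) :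
    ¬ (Submodule.span F {z₁, z₂, z₃}).IsKummer := by
  intro hK
  have h₂₁ := mul_eq_neg_smul_of_mul_eq_smul hi h₁₂
  have h₃₂ := mul_eq_neg_smul_of_mul_eq_smul hi h₂₃
  have hpow : ∀ c : F, (z₁ + z₂ + c • z₃) ^ 4 ∈ Set.range (algebraMap F A) := fun c =>
    hK _ (add_mem (add_mem (Submodule.subset_span (by simp)) (Submodule.subset_span (by simp)))
      (Submodule.smul_mem _ c (Submodule.subset_span (by simp))))
  set w := z₁ * (z₂ * (z₃ * z₃))
  have hw : (16 - 16 * i) • w ∈ Set.range (algebraMap F A) := by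
    obtain ⟨μ₁, e₁⟩ := hpow 1
    obtain ⟨μ₂, e₂⟩ := hpow i
    obtain ⟨μ₃, e₃⟩ := hpow (-1)
    obtain ⟨μ₄, e₄⟩ := hpow (-i)
    refine ⟨μ₁ - μ₂ + μ₃ - μ₄, ?_⟩
    rw [← alternating_sum_pow_four_of_cyclic hi h₂₁ h₃₂ h₃₁, map_sub, map_add, map_sub, e₁, e₂, e₃,
      e₄, one_smul]
  -- moving `z₁` to the front past `z₃²` and `z₂` costs `i² · (-i) = i`
  have hwz : w * z₁ = i • (z₁ * w) := by
    simp only [w, mul_assoc, h₃₁, mul_left_comm_of_mul_eq_smul h₃₁,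
      mul_left_comm_of_mul_eq_smul h₂₁, mul_smul_comm, smul_smul]
    congr 1
    linear_combination (-i) * hi
  have hi1 : i ≠ 1 := fun h => by norm_num [h] at hi
  refine mul_ne_zero hz₁ (mul_ne_zero hz₁ (mul_ne_zero hz₂ (mul_ne_zero hz₃ hz₃))) ?_
  refine mul_eq_zero_of_smul_mem_range_algebraMap hi1 ?_ hw hwz
  rw [← mul_one_sub]
  exact mul_ne_zero (by norm_num) (sub_ne_zero.mpr hi1.symm)

end Kummer

theorem statement12_general {F A : Type*} [Field F] [CharZero F] [DivisionRing A] [Algebra F A]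
    (i : F) (hi : i ^ 2 = -1) (n : ℕ)
    (P : TensorCyclicPres F A i n)
    (r : ℕ) (v : Fin r → A)
    (hmon : ∀ k, P.IsMonomial (v k))
    (hK : ∀ u ∈ Submodule.span F (Set.range v), u ^ 4 ∈ Set.range (algebraMap F A))
    (hrel : ∀ j k : Fin r, j ≠ k →
      v j * v k = i • (v k * v j) ∨ v k * v j = i • (v j * v k)) :
    ∃ σ : Equiv.Perm (Fin r), ∀ k j : Fin r, k < j →
      v (σ k) * v (σ j) = i • (v (σ j) * v (σ k)) := by
  let R : Fin r → Fin r → Prop := fun j k => v j * v k = i • (v k * v j)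
  have hv : ∀ k, v k ≠ 0 := fun k => (hmon k).ne_zero
  have hasymm : ∀ j k, R j k → ¬ R k j := fun j k hjk hkj =>
    mul_ne_zero (hv j) (hv k) (mul_eq_zero_of_mul_eq_smul_mul_of_mul_eq_smul_mul hi hjk hkj)
  have : IsStrictTotalOrder (Fin r) R :=
    { trichotomous := fun j k hjk hkj => by_contra fun hne => (hrel j k hne).elim hjk hkj
      irrefl := fun j hj => hasymm j j hj hj
      trans := fun a b c hab hbc => by
        by_contra hac
        have hca : R c a := by
          refine (hrel a c fun h => ?_).resolve_left hac
          subst h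
          exact hasymm a b hab hbc
        refine not_isKummer_span_of_cyclic hi (hv a) (hv b) (hv c) hab hbc hca
          (Submodule.IsKummer.mono hK (Submodule.span_le.mpr ?_))
        rintro _ (rfl | rfl | rfl) <;> exact Submodule.subset_span ⟨_, rfl⟩ }
  exact Fintype.exists_equiv_fin_rel_of_lt (Fintype.card_fin r) R

/-- If `v₁, …, v_r` are distinct monomials spanning a Kummer space, such that for any two
of them either `vⱼ vₖ = i · vₖ vⱼ` or `vₖ vⱼ = i · vⱼ vₖ` (no two commute or
anti-commute), then they can be reordered by a permutation `σ` so that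
`v_{σ(k)} v_{σ(j)} = i · v_{σ(j)} v_{σ(k)}` whenever `k < j`. -/
theorem statement12 {F A : Type*} [Field F] [CharZero F] [DivisionRing A] [Algebra F A]
    (i : F) (hi : i ^ 2 = -1) (n : ℕ) (hn : 1 ≤ n)
    (P : TensorCyclicPres F A i n) (hdim : Module.finrank F A = 16 ^ n)
    (r : ℕ) (v : Fin r → A)
    (hmon : ∀ k, P.IsMonomial (v k)) (hinj : Function.Injective v)
    (hK : ∀ u ∈ Submodule.span F (Set.range v), u ^ 4 ∈ Set.range (algebraMap F A))
    (hrel : ∀ j k : Fin r, j ≠ k →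
      v j * v k = i • (v k * v j) ∨ v k * v j = i • (v j * v k)) :
    ∃ σ : Equiv.Perm (Fin r), ∀ k j : Fin r, k < j →
      v (σ k) * v (σ j) = i • (v (σ j) * v (σ k)) :=
  statement12_general i hi n P r v hmon hK hrel
end

section
/- Let n ≥ 0 and let v₁, …, v_{2n+1}, w ∈ A be nonzero elements with v_k⁴ ∈ F·1 for all k and w⁴ ∈ F·1, satisfying v_k·v_j = i·v_j·v_k for all 1 ≤ k < j ≤ 2n+1. Suppose there is an odd integer r with 1 ≤ r ≤ 2n+1 such that v_k·w = i·w·v_k for all k < r, v_r·w = −w·v_r, and w·v_k = i·v_k·w for all k > r. Then there exist nonzero elements μ₁, η₁, …, μ_{n+1}, η_{n+1} ∈ A such that: the F-subalgebra of A generated by {v₁, …, v_{2n+1}, w} equals the F-subalgebra generated by {μ₁, η₁, …, μ_{n+1}, η_{n+1}}; μ_j·η_j = i·η_j·μ_j for 1 ≤ j ≤ n; μ_{n+1}·η_{n+1} = −η_{n+1}·μ_{n+1}; any two elements of {μ₁, η₁, …, μ_{n+1}, η_{n+1}} other than a pair μ_j, η_j with the same index commute; and μ_j⁴ ∈ F·1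 and η_j⁴ ∈ F·1 for all 1 ≤ j ≤ n+1. -/
/-!
Write `x ∼ᶜ y` for `x y = iᶜ y x` (`QCommute i c x y`); the exponent only matters mod 4 and is
additive in each argument. Since `v₁ ∼¹ v₂` and `v₁⁴, v₂⁴` are nonzero scalars, every element `x`
can be multiplied by a monomial `v₁ᵃ v₂ᵇ` so that it commutes with `v₁` and `v₂`; this monomial is
invertible inside any subalgebra containing `v₁, v₂`, so the generated subalgebra does not change.
Doing this with `(a, b) = (1, 3)` to `v₃, …, v_{2n+1}` and with a suitable `(a, b)` to `w` splits
off the cyclic pair `(v₁, v₂)` and leaves a system of the same kind with `n - 1`, in which the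
exponents of the new `vₖ` against the new `w` are again `1, …, 1, 2, 3, …, 3` (the `2` moved two
places to the left) or, once the `2` has reached `v₁`, constantly `2`. For `n = 0` the single pair
`v₁, w` anticommutes and is the quaternion pair.
-/

open Set

theorem pow_four_eq_one_of_sq_eq_neg_one {M : Type*} [Monoid M] [HasDistribNeg M] {x : M}
    (h : x ^ 2 = -1) : x ^ 4 = 1 := by
  rw [show 4 = 2 * 2 from rfl, pow_mul, h, neg_one_sq]

theorem Set.image_Icc_ite_sub_one {α : Type*} (z : α) (f : ℕ → α) (m : ℕ) :
    (fun j => if j = 1 then z else f (j - 1)) '' Icc 1 (m + 1) = insert z (f '' Icc 1 m) := by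
  ext x
  simp only [mem_image, mem_Icc, mem_insert_iff]
  constructor
  · rintro ⟨j, ⟨hj₁, hj₂⟩, rfl⟩
    by_cases hj : j = 1
    · simp [hj]
    · exact Or.inr ⟨j - 1, ⟨by omega, by omega⟩, by simp [hj]⟩
  · rintro (rfl | ⟨j, ⟨hj₁, hj₂⟩, rfl⟩)
    · exact ⟨1, ⟨le_rfl, by omega⟩, by simp⟩
    · exact ⟨j + 1, ⟨by omega, by omega⟩, by simp [show j ≠ 0 by omega]⟩

def twist {M : Type*} [Monoid M] (u₁ u₂ : M) (a b : ℕ) (x : M) : M := u₁ ^ a * u₂ ^ b * x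

section Ring

variable {F A : Type*} [Field F] [Ring A] [Algebra F A] {q : F} {c d : ℤ} {x y z : A}

def QCommute (q : F) (c : ℤ) (x y : A) : Prop := x * y = q ^ c • (y * x)

theorem Commute.qcommute (h : Commute x y) (q : F) : QCommute q 0 x y := by
  simpa [QCommute] using h.eq

namespace QCommute

theorem commute (h : QCommute q 0 x y) : Commute x y := by
  simpa [QCommute, commute_iff_eq] using h

theorem one_iff : QCommute q 1 x y ↔ x * y = q • (y * x) := by
  rw [QCommute, zpow_one]

theorem two_iff (hq : q ^ 2 = -1) : QCommute q 2 x y ↔ x * y = -(y * x) := by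
  rw [QCommute, zpow_two, ← sq, hq, neg_one_smul]

theorem of_modEq {m : ℕ} (hq : q ^ m = 1) (hcd : c ≡ d [ZMOD m]) (h : QCommute q c x y) :
    QCommute q d x y := by
  obtain ⟨t, ht⟩ := hcd.dvd
  obtain rfl : d = c + m * t := by omega
  rcases eq_or_ne m 0 with rfl | hm
  · simpa using h
  have hq0 : q ≠ 0 := by rintro rfl; simp [hm] at hq
  rw [QCommute, zpow_add₀ hq0, zpow_mul, zpow_natCast, hq, one_zpow, mul_one]
  exact h

theorem symm (hq : q ≠ 0) (h : QCommute q c x y) : QCommute q (-c) y x := by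
  rw [QCommute, h, smul_smul, ← zpow_add₀ hq, neg_add_cancel, zpow_zero, one_smul]

theorem mul_left (hq : q ≠ 0) (hx : QCommute q c x z) (hy : QCommute q d y z) :
    QCommute q (c + d) (x * y) z := by
  rw [QCommute, mul_assoc, hy, mul_smul_comm, ← mul_assoc, hx, smul_mul_assoc, smul_smul,
    ← zpow_add₀ hq, add_comm d, mul_assoc]

theorem mul_right (hq : q ≠ 0) (hy : QCommute q c x y) (hz : QCommute q d x z) :
    QCommute q (c + d) x (y * z) := by
  rw [QCommute, ← mul_assoc, hy, smul_mul_assoc, mul_assoc, hz, mul_smul_comm, smul_smul,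
    ← zpow_add₀ hq, mul_assoc]

theorem pow_left (hq : q ≠ 0) (h : QCommute q c x y) (m : ℕ) : QCommute q (m * c) (x ^ m) y := by
  induction m with
  | zero => simpa using (Commute.one_left y).qcommute q
  | succ m ih => simpa [pow_succ, add_mul] using ih.mul_left hq h

theorem pow_right (hq : q ≠ 0) (h : QCommute q c x y) (m : ℕ) :
    QCommute q (m * c) x (y ^ m) := by
  induction m with
  | zero => simpa using (Commute.one_right x).qcommute q
  | succ m ih => simpa [pow_succ, add_mul] using ih.mul_right hq h

theorem mul_sq (hq : q ≠ 0) (h : QCommute q c x y) :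
    (x * y) ^ 2 = q ^ (-c) • (x ^ 2 * y ^ 2) := by
  have h' : y * x = q ^ (-c) • (x * y) := h.symm hq
  rw [sq, mul_assoc, ← mul_assoc y, h', smul_mul_assoc, mul_smul_comm, sq, sq]
  noncomm_ring

theorem mul_pow_four_mem_bot (hq : q ≠ 0) (h : QCommute q c x y)
    (hx : x ^ 4 ∈ (⊥ : Subalgebra F A)) (hy : y ^ 4 ∈ (⊥ : Subalgebra F A)) :
    (x * y) ^ 4 ∈ (⊥ : Subalgebra F A) := by
  have hsq := ((h.pow_left hq 2).pow_right hq 2).mul_sq hq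
  rw [show 4 = 2 * 2 from rfl, pow_mul, h.mul_sq hq, smul_pow, hsq, smul_smul, ← pow_mul,
    ← pow_mul]
  exact Subalgebra.smul_mem _ (mul_mem hx hy) _

end QCommute

variable {u₁ u₂ : A} {c₁ c₂ : ℤ}

theorem Subalgebra.twist_mem {B : Subalgebra F A} (h₁ : u₁ ∈ B) (h₂ : u₂ ∈ B) (hx : x ∈ B)
    (a b : ℕ) : twist u₁ u₂ a b x ∈ B :=
  mul_mem (mul_mem (pow_mem h₁ a) (pow_mem h₂ b)) hx

theorem QCommute.twist_left (hq : q ≠ 0) (h₁ : QCommute q c₁ u₁ y) (h₂ : QCommute q c₂ u₂ y)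
    (h : QCommute q d x y) (a b : ℕ) : QCommute q (a * c₁ + b * c₂ + d) (twist u₁ u₂ a b x) y :=
  ((h₁.pow_left hq a).mul_left hq (h₂.pow_left hq b)).mul_left hq h

theorem QCommute.twist_right (hq : q ≠ 0) (h₁ : QCommute q c₁ x u₁) (h₂ : QCommute q c₂ x u₂)
    (h : QCommute q d x y) (a b : ℕ) : QCommute q (a * c₁ + b * c₂ + d) x (twist u₁ u₂ a b y) :=
  ((h₁.pow_right hq a).mul_right hq (h₂.pow_right hq b)).mul_right hq h

theorem commute_twist (hq : q ^ 4 = 1) (h₁₂ : QCommute q 1 u₁ u₂) (h₁ : QCommute q c₁ u₁ x)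
    (h₂ : QCommute q c₂ u₂ x) {a b : ℕ} (hb : c₁ ≡ -b [ZMOD 4]) (ha : c₂ ≡ a [ZMOD 4]) :
    Commute u₁ (twist u₁ u₂ a b x) ∧ Commute u₂ (twist u₁ u₂ a b x) := by
  have hq0 : q ≠ 0 := by rintro rfl; simp at hq
  constructor
  · refine (((Commute.refl u₁).qcommute q).twist_right hq0 h₁₂ h₁ a b).of_modEq hq ?_ |>.commute
    simp only [Int.ModEq] at *
    omega
  · refine ((h₁₂.symm hq0).twist_right hq0 ((Commute.refl u₂).qcommute q) h₂ a b).of_modEq hq ?_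
      |>.commute
    simp only [Int.ModEq] at *
    omega

theorem twist_pow_four_mem_bot (hq : q ≠ 0) (h₁₂ : QCommute q 1 u₁ u₂) (h₁ : QCommute q c₁ u₁ x)
    (h₂ : QCommute q c₂ u₂ x) (hu₁ : u₁ ^ 4 ∈ (⊥ : Subalgebra F A))
    (hu₂ : u₂ ^ 4 ∈ (⊥ : Subalgebra F A)) (hx : x ^ 4 ∈ (⊥ : Subalgebra F A)) (a b : ℕ) :
    twist u₁ u₂ a b x ^ 4 ∈ (⊥ : Subalgebra F A) := by
  have hu₁a : (u₁ ^ a) ^ 4 ∈ (⊥ : Subalgebra F A) := by rw [pow_right_comm]; exact pow_mem hu₁ a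
  have hu₂b : (u₂ ^ b) ^ 4 ∈ (⊥ : Subalgebra F A) := by rw [pow_right_comm]; exact pow_mem hu₂ b
  exact ((h₁.pow_left hq a).mul_left hq (h₂.pow_left hq b)).mul_pow_four_mem_bot hq
    (((h₁₂.pow_left hq a).pow_right hq b).mul_pow_four_mem_bot hq hu₁a hu₂b) hx

end Ring

section Inverse

variable {F A : Type*} [Field F] [DivisionRing A] [Algebra F A] {B : Subalgebra F A} {x : A}

theorem Subalgebra.inv_mem_of_pow_succ_mem_bot (hx : x ∈ B) {m : ℕ}
    (hxm : x ^ (m + 1) ∈ (⊥ : Subalgebra F A)) : x⁻¹ ∈ B := by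
  rcases eq_or_ne x 0 with rfl | hx0
  · simp
  obtain ⟨c, hc⟩ := Algebra.mem_bot.mp hxm
  have hinv : x⁻¹ = c⁻¹ • x ^ m := by
    rw [Algebra.smul_def, map_inv₀, hc, pow_succ, mul_inv_rev,
      inv_mul_cancel_right₀ (pow_ne_zero m hx0)]
  rw [hinv]
  exact Subalgebra.smul_mem _ (pow_mem hx m) _

theorem mem_of_twist_mem {u₁ u₂ : A} (h₁ : u₁ ∈ B) (h₂ : u₂ ∈ B) (hu₁ : u₁ ≠ 0) (hu₂ : u₂ ≠ 0)
    (hu₁4 : u₁ ^ 4 ∈ (⊥ : Subalgebra F A)) (hu₂4 : u₂ ^ 4 ∈ (⊥ : Subalgebra F A)) {a b : ℕ}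
    (h : twist u₁ u₂ a b x ∈ B) : x ∈ B := by
  have hinv : (u₁ ^ a * u₂ ^ b)⁻¹ ∈ B := by
    rw [mul_inv_rev, ← inv_pow, ← inv_pow]
    exact mul_mem (pow_mem (Subalgebra.inv_mem_of_pow_succ_mem_bot h₂ hu₂4) b)
      (pow_mem (Subalgebra.inv_mem_of_pow_succ_mem_bot h₁ hu₁4) a)
  rw [← inv_mul_cancel_left₀ (mul_ne_zero (pow_ne_zero a hu₁) (pow_ne_zero b hu₂)) x]
  exact mul_mem hinv h

end Inverse

section SymbolGenerators

variable {F A : Type*} [Field F] [Ring A] [Algebra F A]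

def HasSymbolGenerators (i : F) (n : ℕ) (B : Subalgebra F A) : Prop :=
  ∃ μ η : ℕ → A,
    (∀ j, 1 ≤ j → j ≤ n + 1 → μ j ≠ 0 ∧ η j ≠ 0) ∧
    B = Algebra.adjoin F ((μ '' Icc 1 (n + 1)) ∪ (η '' Icc 1 (n + 1))) ∧
    (∀ j, 1 ≤ j → j ≤ n → μ j * η j = i • (η j * μ j)) ∧
    (μ (n + 1) * η (n + 1) = -(η (n + 1) * μ (n + 1))) ∧
    (∀ j k, 1 ≤ j → j ≤ n + 1 → 1 ≤ k → k ≤ n + 1 → j ≠ k →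
      Commute (μ j) (μ k) ∧ Commute (μ j) (η k) ∧ Commute (η j) (η k)) ∧
    (∀ j, 1 ≤ j → j ≤ n + 1 →
      (μ j) ^ 4 ∈ (⊥ : Subalgebra F A) ∧ (η j) ^ 4 ∈ (⊥ : Subalgebra F A))

variable {i : F} {x y : A}

theorem hasSymbolGenerators_zero (hx : x ≠ 0) (hy : y ≠ 0) (hxy : x * y = -(y * x))
    (hx4 : x ^ 4 ∈ (⊥ : Subalgebra F A)) (hy4 : y ^ 4 ∈ (⊥ : Subalgebra F A)) :
    HasSymbolGenerators i 0 (Algebra.adjoin F {x, y}) := by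
  refine ⟨fun _ => x, fun _ => y, fun _ _ _ => ⟨hx, hy⟩, ?_, by omega, hxy, by omega,
    fun _ _ _ => ⟨hx4, hy4⟩⟩
  rw [Icc_self, image_singleton, image_singleton, singleton_union]

theorem HasSymbolGenerators.sup_adjoin_pair {n : ℕ} {B : Subalgebra F A}
    (hB : HasSymbolGenerators i n B) (hxy : x * y = i • (y * x)) (hx : x ≠ 0) (hy : y ≠ 0)
    (hx4 : x ^ 4 ∈ (⊥ : Subalgebra F A)) (hy4 : y ^ 4 ∈ (⊥ : Subalgebra F A))
    (hcomm : ∀ b ∈ B, Commute x b ∧ Commute y b) :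
    HasSymbolGenerators i (n + 1) (Algebra.adjoin F {x, y} ⊔ B) := by
  obtain ⟨μ, η, hne, rfl, hcyc, hquat, hcomm', hpow⟩ := hB
  have hmem : ∀ j, 1 ≤ j → j ≤ n + 1 →
      μ j ∈ Algebra.adjoin F (μ '' Icc 1 (n + 1) ∪ η '' Icc 1 (n + 1)) ∧
        η j ∈ Algebra.adjoin F (μ '' Icc 1 (n + 1) ∪ η '' Icc 1 (n + 1)) := fun j h₁ h₂ =>
    ⟨Algebra.subset_adjoin (Or.inl ⟨j, ⟨h₁, h₂⟩, rfl⟩),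
      Algebra.subset_adjoin (Or.inr ⟨j, ⟨h₁, h₂⟩, rfl⟩)⟩
  refine ⟨fun j => if j = 1 then x else μ (j - 1), fun j => if j = 1 then y else η (j - 1),
    ?_, ?_, ?_, ?_, ?_, ?_⟩
  · intro j h₁ h₂
    by_cases hj : j = 1
    · simp [hj, hx, hy]
    · simpa [hj] using hne (j - 1) (by omega) (by omega)
  · rw [image_Icc_ite_sub_one, image_Icc_ite_sub_one, ← Algebra.adjoin_union]
    congr 1
    ext
    simp only [mem_union, mem_insert_iff, mem_singleton_iff]
    tauto
  · intro j h₁ h₂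
    by_cases hj : j = 1
    · simpa [hj] using hxy
    · simpa [hj] using hcyc (j - 1) (by omega) (by omega)
  · simpa using hquat
  · intro j k hj₁ hj₂ hk₁ hk₂ hjk
    by_cases hj : j = 1 <;> by_cases hk : k = 1
    · omega
    · obtain ⟨hμ, hη⟩ := hmem (k - 1) (by omega) (by omega)
      simp only [hj, hk, if_true, if_false]
      exact ⟨(hcomm _ hμ).1, (hcomm _ hη).1, (hcomm _ hη).2⟩
    · obtain ⟨hμ, hη⟩ := hmem (j - 1) (by omega) (by omega)
      simp only [hj, hk, if_true, if_false]
      exact ⟨(hcomm _ hμ).1.symm, (hcomm _ hμ).2.symm, (hcomm _ hη).2.symm⟩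
    · simpa [hj, hk] using hcomm' (j - 1) (k - 1) (by omega) (by omega) (by omega) (by omega)
        (by omega)
  · intro j h₁ h₂
    by_cases hj : j = 1
    · simp [hj, hx4, hy4]
    · simpa [hj] using hpow (j - 1) (by omega) (by omega)

end SymbolGenerators

section Exponents

-- The constant alternative is what the first one becomes once `r = 1` and `(v₁, v₂)` is split off.
def AdmissibleExponents (n : ℕ) (e : ℕ → ℤ) : Prop :=
  (∃ r, Odd r ∧ r ≤ 2 * n + 1 ∧ ∀ k, 1 ≤ k → k ≤ 2 * n + 1 →
      e k ≡ (if k < r then 1 else if k = r then 2 else 3) [ZMOD 4]) ∨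
    ∀ k, 1 ≤ k → k ≤ 2 * n + 1 → e k ≡ 2 [ZMOD 4]

variable {n : ℕ} {e : ℕ → ℤ}

theorem AdmissibleExponents.zero (he : AdmissibleExponents 0 e) : e 1 ≡ 2 [ZMOD 4] := by
  rcases he with ⟨r, ⟨t, rfl⟩, hr, he⟩ | he
  · obtain rfl : t = 0 := by omega
    simpa using he 1 le_rfl le_rfl
  · exact he 1 le_rfl le_rfl

theorem AdmissibleExponents.succ (he : AdmissibleExponents (n + 1) e) :
    ∃ a b : ℕ, e 1 ≡ -b [ZMOD 4] ∧ e 2 ≡ a [ZMOD 4] ∧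
      AdmissibleExponents n (fun k => e (k + 2) - a - b) := by
  simp only [AdmissibleExponents, Int.ModEq] at *
  rcases he with ⟨r, ⟨t, rfl⟩, hr, he⟩ | he
  · rcases t with _ | t
    · refine ⟨3, 2, ?_, ?_, Or.inr fun k h₁ h₂ => ?_⟩
      · have := he 1 le_rfl (by omega); split_ifs at this <;> omega
      · have := he 2 (by omega) (by omega); split_ifs at this <;> omega
      · have := he (k + 2) (by omega) (by omega); split_ifs at this <;> omega
    · refine ⟨1, 3, ?_, ?_, Or.inl ⟨2 * t + 1, odd_two_mul_add_one t, by omega, fun k h₁ h₂ => ?_⟩⟩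
      · have := he 1 le_rfl (by omega); split_ifs at this <;> omega
      · have := he 2 (by omega) (by omega); split_ifs at this <;> omega
      · have := he (k + 2) (by omega) (by omega); split_ifs at this ⊢ <;> omega
  · refine ⟨2, 2, ?_, ?_, Or.inr fun k h₁ h₂ => ?_⟩
    · have := he 1 le_rfl (by omega); omega
    · have := he 2 (by omega) (by omega); omega
    · have := he (k + 2) (by omega) (by omega); omega

end Exponents

section KummerSystem

variable {F A : Type*} [Field F] [DivisionRing A] [Algebra F A] {q : F} {m : ℕ} {v : ℕ → A}
  {w : A} {e : ℕ → ℤ}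

structure IsKummerSystem (q : F) (m : ℕ) (v : ℕ → A) (w : A) (e : ℕ → ℤ) : Prop where
  ne_zero : ∀ k, 1 ≤ k → k ≤ m → v k ≠ 0
  pow_four_mem : ∀ k, 1 ≤ k → k ≤ m → v k ^ 4 ∈ (⊥ : Subalgebra F A)
  w_ne_zero : w ≠ 0
  w_pow_four_mem : w ^ 4 ∈ (⊥ : Subalgebra F A)
  qcommute : ∀ k j, 1 ≤ k → k < j → j ≤ m → QCommute q 1 (v k) (v j)
  qcommute_w : ∀ k, 1 ≤ k → k ≤ m → QCommute q (e k) (v k) w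

theorem adjoin_eq_sup_adjoin_twist (h₁ : v 1 ≠ 0) (h₂ : v 2 ≠ 0)
    (h₁4 : v 1 ^ 4 ∈ (⊥ : Subalgebra F A)) (h₂4 : v 2 ^ 4 ∈ (⊥ : Subalgebra F A)) (m a b : ℕ) :
    Algebra.adjoin F (v '' Icc 1 (m + 2) ∪ {w}) = Algebra.adjoin F {v 1, v 2} ⊔
      Algebra.adjoin F ((fun k => twist (v 1) (v 2) 1 3 (v (k + 2))) '' Icc 1 m ∪
        {twist (v 1) (v 2) a b w}) := by
  rw [← Algebra.adjoin_union]
  apply le_antisymm <;> apply Algebra.adjoin_le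
  · rintro _ (⟨k, ⟨hk₁, hk₂⟩, rfl⟩ | rfl)
    · rcases k with _ | _ | _ | k
      · omega
      · exact Algebra.subset_adjoin (by simp)
      · exact Algebra.subset_adjoin (by simp)
      · exact mem_of_twist_mem (Algebra.subset_adjoin (by simp)) (Algebra.subset_adjoin (by simp))
          h₁ h₂ h₁4 h₂4 (a := 1) (b := 3)
          (Algebra.subset_adjoin (Or.inr (Or.inl ⟨k + 1, ⟨by omega, by omega⟩, rfl⟩)))
    · exact mem_of_twist_mem (Algebra.subset_adjoin (by simp)) (Algebra.subset_adjoin (by simp))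
        h₁ h₂ h₁4 h₂4 (Algebra.subset_adjoin (Or.inr (Or.inr rfl)))
  · have hv : ∀ k, 1 ≤ k → k ≤ m + 2 → v k ∈ Algebra.adjoin F (v '' Icc 1 (m + 2) ∪ {w}) :=
      fun k hk₁ hk₂ => Algebra.subset_adjoin (Or.inl ⟨k, ⟨hk₁, hk₂⟩, rfl⟩)
    have hw : w ∈ Algebra.adjoin F (v '' Icc 1 (m + 2) ∪ {w}) := Algebra.subset_adjoin (Or.inr rfl)
    rintro _ ((rfl | rfl) | ⟨k, ⟨hk₁, hk₂⟩, rfl⟩ | rfl)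
    · exact hv 1 le_rfl (by omega)
    · exact hv 2 (by omega) (by omega)
    · exact Subalgebra.twist_mem (hv 1 le_rfl (by omega)) (hv 2 (by omega) (by omega))
        (hv (k + 2) (by omega) (by omega)) 1 3
    · exact Subalgebra.twist_mem (hv 1 le_rfl (by omega)) (hv 2 (by omega) (by omega)) hw a b

namespace IsKummerSystem

variable (h : IsKummerSystem q (m + 2) v w e) (hq : q ^ 4 = 1) {a b : ℕ}
  (hb : e 1 ≡ -b [ZMOD 4]) (ha : e 2 ≡ a [ZMOD 4])
include h hq hb ha

theorem commute_peel : ∀ y ∈ (fun k => twist (v 1) (v 2) 1 3 (v (k + 2))) '' Icc 1 m ∪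
    {twist (v 1) (v 2) a b w}, Commute (v 1) y ∧ Commute (v 2) y := by
  have h₁₂ := h.qcommute 1 2 le_rfl one_lt_two (by omega)
  rintro _ (⟨k, ⟨hk₁, hk₂⟩, rfl⟩ | rfl)
  · exact commute_twist hq h₁₂ (h.qcommute 1 (k + 2) le_rfl (by omega) (by omega))
      (h.qcommute 2 (k + 2) (by omega) (by omega) (by omega)) (by decide) (by decide)
  · exact commute_twist hq h₁₂ (h.qcommute_w 1 le_rfl (by omega))
      (h.qcommute_w 2 (by omega) (by omega)) hb ha

theorem peel : IsKummerSystem q m (fun k => twist (v 1) (v 2) 1 3 (v (k + 2)))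
    (twist (v 1) (v 2) a b w) (fun k => e (k + 2) - a - b) := by
  have hq0 : q ≠ 0 := by rintro rfl; simp at hq
  have h₁₂ := h.qcommute 1 2 le_rfl one_lt_two (by omega)
  have hv₁ := h.ne_zero 1 le_rfl (by omega)
  have hv₂ := h.ne_zero 2 (by omega) (by omega)
  have hcomm := h.commute_peel hq hb ha
  refine ⟨fun k hk₁ hk₂ => ?_, fun k hk₁ hk₂ => ?_, ?_, ?_, fun k j hk hkj hj => ?_,
    fun k hk₁ hk₂ => ?_⟩
  · exact mul_ne_zero (mul_ne_zero (pow_ne_zero _ hv₁) (pow_ne_zero _ hv₂))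
      (h.ne_zero (k + 2) (by omega) (by omega))
  · exact twist_pow_four_mem_bot hq0 h₁₂ (h.qcommute 1 (k + 2) le_rfl (by omega) (by omega))
      (h.qcommute 2 (k + 2) (by omega) (by omega) (by omega)) (h.pow_four_mem 1 le_rfl (by omega))
      (h.pow_four_mem 2 (by omega) (by omega)) (h.pow_four_mem (k + 2) (by omega) (by omega)) 1 3
  · exact mul_ne_zero (mul_ne_zero (pow_ne_zero _ hv₁) (pow_ne_zero _ hv₂)) h.w_ne_zero
  · exact twist_pow_four_mem_bot hq0 h₁₂ (h.qcommute_w 1 le_rfl (by omega))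
      (h.qcommute_w 2 (by omega) (by omega)) (h.pow_four_mem 1 le_rfl (by omega))
      (h.pow_four_mem 2 (by omega) (by omega)) h.w_pow_four_mem a b
  · obtain ⟨hc₁, hc₂⟩ := hcomm _ (Or.inl ⟨j, ⟨by omega, hj⟩, rfl⟩)
    have := (h.qcommute 1 (k + 2) le_rfl (by omega) (by omega)).symm hq0 |>.twist_right hq0
      ((h.qcommute 2 (k + 2) (by omega) (by omega) (by omega)).symm hq0)
      (h.qcommute (k + 2) (j + 2) (by omega) (by omega) (by omega)) 1 3
    exact ((hc₁.qcommute q).twist_left hq0 (hc₂.qcommute q) this 1 3).of_modEq hq (by decide)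
  · obtain ⟨hc₁, hc₂⟩ := hcomm _ (Or.inr rfl)
    have := (h.qcommute 1 (k + 2) le_rfl (by omega) (by omega)).symm hq0 |>.twist_right hq0
      ((h.qcommute 2 (k + 2) (by omega) (by omega) (by omega)).symm hq0)
      (h.qcommute_w (k + 2) (by omega) (by omega)) a b
    exact ((hc₁.qcommute q).twist_left hq0 (hc₂.qcommute q) this 1 3).of_modEq hq
      (by rw [Int.ModEq]; ring_nf)

end IsKummerSystem

theorem IsKummerSystem.hasSymbolGenerators {i : F} (hi : i ^ 2 = -1) {n : ℕ}
    (h : IsKummerSystem i (2 * n + 1) v w e) (he : AdmissibleExponents n e) :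
    HasSymbolGenerators i n (Algebra.adjoin F (v '' Icc 1 (2 * n + 1) ∪ {w})) := by
  have hi4 := pow_four_eq_one_of_sq_eq_neg_one hi
  induction n generalizing v w e with
  | zero =>
    have hvw := (QCommute.two_iff hi).mp ((h.qcommute_w 1 le_rfl le_rfl).of_modEq hi4 he.zero)
    rw [Icc_self, image_singleton, singleton_union]
    exact hasSymbolGenerators_zero (h.ne_zero 1 le_rfl le_rfl) h.w_ne_zero hvw
      (h.pow_four_mem 1 le_rfl le_rfl) h.w_pow_four_mem
  | succ n ih =>
    obtain ⟨a, b, hb, ha, he'⟩ := he.succ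
    have h' : IsKummerSystem i (2 * n + 1 + 2) v w e := h
    rw [show 2 * (n + 1) + 1 = 2 * n + 1 + 2 by ring, adjoin_eq_sup_adjoin_twist
      (h'.ne_zero 1 le_rfl (by omega)) (h'.ne_zero 2 (by omega) (by omega))
      (h'.pow_four_mem 1 le_rfl (by omega)) (h'.pow_four_mem 2 (by omega) (by omega)) _ a b]
    refine (ih (h'.peel hi4 hb ha) he').sup_adjoin_pair
      (QCommute.one_iff.mp (h'.qcommute 1 2 le_rfl one_lt_two (by omega)))
      (h'.ne_zero 1 le_rfl (by omega)) (h'.ne_zero 2 (by omega) (by omega))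
      (h'.pow_four_mem 1 le_rfl (by omega)) (h'.pow_four_mem 2 (by omega) (by omega))
      fun x hx => ⟨?_, ?_⟩
    · exact Algebra.commute_of_mem_adjoin_of_forall_mem_commute hx fun y hy =>
        (h'.commute_peel hi4 hb ha y hy).1
    · exact Algebra.commute_of_mem_adjoin_of_forall_mem_commute hx fun y hy =>
        (h'.commute_peel hi4 hb ha y hy).2

end KummerSystem

theorem statement13_general {F A : Type*} [Field F] [DivisionRing A] [Algebra F A]
    (i : F) (hi : i ^ 2 = -1) (n : ℕ) (v : ℕ → A) (w : A)
    (hv0 : ∀ k, 1 ≤ k → k ≤ 2 * n + 1 → v k ≠ 0) (hw0 : w ≠ 0)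
    (hv4 : ∀ k, 1 ≤ k → k ≤ 2 * n + 1 → (v k) ^ 4 ∈ Set.range (algebraMap F A))
    (hw4 : w ^ 4 ∈ Set.range (algebraMap F A))
    (hvv : ∀ k j, 1 ≤ k → k < j → j ≤ 2 * n + 1 → v k * v j = i • (v j * v k))
    (r : ℕ) (hr2 : r ≤ 2 * n + 1) (hodd : Odd r)
    (hlt : ∀ k, 1 ≤ k → k < r → v k * w = i • (w * v k))
    (hreq : v r * w = -(w * v r))
    (hgt : ∀ k, r < k → k ≤ 2 * n + 1 → w * v k = i • (v k * w)) :
    ∃ μ η : ℕ → A,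
      (∀ j, 1 ≤ j → j ≤ n + 1 → μ j ≠ 0 ∧ η j ≠ 0) ∧
      Algebra.adjoin F ((v '' Set.Icc 1 (2 * n + 1)) ∪ {w}) =
        Algebra.adjoin F ((μ '' Set.Icc 1 (n + 1)) ∪ (η '' Set.Icc 1 (n + 1))) ∧
      (∀ j, 1 ≤ j → j ≤ n → μ j * η j = i • (η j * μ j)) ∧
      (μ (n + 1) * η (n + 1) = -(η (n + 1) * μ (n + 1))) ∧
      (∀ j k, 1 ≤ j → j ≤ n + 1 → 1 ≤ k → k ≤ n + 1 → j ≠ k →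
        Commute (μ j) (μ k) ∧ Commute (μ j) (η k) ∧ Commute (η j) (η k)) ∧
      (∀ j, 1 ≤ j → j ≤ n + 1 →
        (μ j) ^ 4 ∈ Set.range (algebraMap F A) ∧ (η j) ^ 4 ∈ Set.range (algebraMap F A)) := by
  have hi0 : i ≠ 0 := by rintro rfl; norm_num at hi
  have hi4 := pow_four_eq_one_of_sq_eq_neg_one hi
  let e : ℕ → ℤ := fun k => if k < r then 1 else if k = r then 2 else 3
  have hvw : ∀ k, 1 ≤ k → k ≤ 2 * n + 1 → QCommute i (e k) (v k) w := by
    intro k hk₁ hk₂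
    rcases lt_trichotomy k r with hkr | rfl | hkr
    · simpa [e, hkr] using QCommute.one_iff.mpr (hlt k hk₁ hkr)
    · simpa [e] using (QCommute.two_iff hi).mpr hreq
    · have := (QCommute.one_iff.mpr (hgt k hkr hk₂)).symm hi0
      simpa [e, hkr.not_gt, hkr.ne'] using this.of_modEq hi4 (by decide)
  exact IsKummerSystem.hasSymbolGenerators hi
    ⟨hv0, hv4, hw0, hw4, fun k j hk hkj hj => QCommute.one_iff.mpr (hvv k j hk hkj hj), hvw⟩
    (Or.inl ⟨r, hodd, hr2, fun k _ _ => Int.ModEq.refl _⟩)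

/-- Given nonzero Kummer elements `v₁, …, v_{2n+1}, w` (fourth powers in `F·1`)
with `vₖ vⱼ = i · vⱼ vₖ` for `k < j`, and an odd `r` with `1 ≤ r ≤ 2n+1` such that
`vₖ w = i · w vₖ` for `k < r`, `v_r w = -w v_r`, and `w vₖ = i · vₖ w` for `k > r`,
the `F`-subalgebra generated by these elements equals the subalgebra generated by
elements `μ₁, η₁, …, μ_{n+1}, η_{n+1}` forming a tensor product of `n` cyclic algebras
of degree 4 and one quaternion algebra: `μⱼ ηⱼ = i · ηⱼ μⱼ` for `j ≤ n`,
`μ_{n+1} η_{n+1} = -η_{n+1} μ_{n+1}`, all other pairs commute, and all fourth powers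
lie in `F·1`. -/
theorem statement13 {F A : Type*} [Field F] [CharZero F] [DivisionRing A] [Algebra F A]
    (i : F) (hi : i ^ 2 = -1) (n : ℕ) (v : ℕ → A) (w : A)
    (hv0 : ∀ k, 1 ≤ k → k ≤ 2 * n + 1 → v k ≠ 0) (hw0 : w ≠ 0)
    (hv4 : ∀ k, 1 ≤ k → k ≤ 2 * n + 1 → (v k) ^ 4 ∈ Set.range (algebraMap F A))
    (hw4 : w ^ 4 ∈ Set.range (algebraMap F A))
    (hvv : ∀ k j, 1 ≤ k → k < j → j ≤ 2 * n + 1 → v k * v j = i • (v j * v k))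
    (r : ℕ) (hr1 : 1 ≤ r) (hr2 : r ≤ 2 * n + 1) (hodd : Odd r)
    (hlt : ∀ k, 1 ≤ k → k < r → v k * w = i • (w * v k))
    (hreq : v r * w = -(w * v r))
    (hgt : ∀ k, r < k → k ≤ 2 * n + 1 → w * v k = i • (v k * w)) :
    ∃ μ η : ℕ → A,
      (∀ j, 1 ≤ j → j ≤ n + 1 → μ j ≠ 0 ∧ η j ≠ 0) ∧
      Algebra.adjoin F ((v '' Set.Icc 1 (2 * n + 1)) ∪ {w}) =
        Algebra.adjoin F ((μ '' Set.Icc 1 (n + 1)) ∪ (η '' Set.Icc 1 (n + 1))) ∧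
      (∀ j, 1 ≤ j → j ≤ n → μ j * η j = i • (η j * μ j)) ∧
      (μ (n + 1) * η (n + 1) = -(η (n + 1) * μ (n + 1))) ∧
      (∀ j k, 1 ≤ j → j ≤ n + 1 → 1 ≤ k → k ≤ n + 1 → j ≠ k →
        Commute (μ j) (μ k) ∧ Commute (μ j) (η k) ∧ Commute (η j) (η k)) ∧
      (∀ j, 1 ≤ j → j ≤ n + 1 →
        (μ j) ^ 4 ∈ Set.range (algebraMap F A) ∧ (η j) ^ 4 ∈ Set.range (algebraMap F A)) :=
  statement13_general i hi n v w hv0 hw0 hv4 hw4 hvv r hr2 hodd hlt hreq hgt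
end
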